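/- Let T ∈ 𝕋 be a positively weighted tree (each edge has positive weight) with adjacency matrix A. Then there exists a signature matrix S (diagonal with entries ±1) such that S A# S is entrywise non-negative. -/

import Mathlib

open SimpleGraph

/-- `X` is the group inverse of `A`. -/
def IsGroupInverse {n : Type*} [Fintype n] (A X : Matrix n n ℝ) : Prop :=
  A * X * A = A ∧ X * A * X = X ∧ A * X = X * A

/-- A matching of a graph: a set of pairwise non-incident edges. -/
def IsMatching {V : Type*} (G : SimpleGraph V) (M : Finset (Sym2 V)) : Prop :=
  (↑M : Set (Sym2 V)) ⊆ G.edgeSet ∧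
    ∀ e ∈ M, ∀ f ∈ M, e ≠ f → ∀ v : V, ¬(v ∈ e ∧ v ∈ f)

/-- A maximum matching: a matching of maximum cardinality. -/
def IsMaxMatching {V : Type*} (G : SimpleGraph V) (M : Finset (Sym2 V)) : Prop :=
  IsMatching G M ∧ ∀ N : Finset (Sym2 V), IsMatching G N → N.card ≤ M.card

/-- A nonempty list of edges alternately in and out of `M`,
beginning and ending with edges of `M`. -/
def IsAltEdgeList {V : Type*} (M : Set (Sym2 V)) : List (Sym2 V) → Prop
  | [] => False
  | [e] => e ∈ M
  | e :: f :: rest => e ∈ M ∧ f ∉ M ∧ IsAltEdgeList M rest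

/-- A pair of vertices is maximally matchable if they are joined by a path that is
alternating with respect to some maximum matching. -/
def MaxMatchable {V : Type*} (G : SimpleGraph V) (u v : V) : Prop :=
  ∃ (p : G.Walk u v) (M : Finset (Sym2 V)),
    p.IsPath ∧ IsMaxMatching G M ∧ IsAltEdgeList (↑M) p.edges

/-- `G` is a star: some center `c` is adjacent to exactly the other vertices,
and there are no other edges. -/
def IsStar {V : Type*} (G : SimpleGraph V) : Prop :=
  ∃ c : V, ∀ u v : V, G.Adj u v ↔ ((u = c ∧ v ≠ c) ∨ (v = c ∧ u ≠ c))

/-- The class 𝕋: trees with at least one non-pendant vertex in which every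
non-pendant vertex is adjacent to a pendant vertex. -/
def InClassT {V : Type*} [Fintype V] (T : SimpleGraph V) [DecidableRel T.Adj] : Prop :=
  T.IsTree ∧ (∃ v, T.degree v ≠ 1) ∧
    ∀ v, T.degree v ≠ 1 → ∃ u, T.Adj v u ∧ T.degree u = 1

/-- The number of pendant neighbours of `v`. -/
def pendantNbrs {V : Type*} [Fintype V] [DecidableEq V] (T : SimpleGraph V)
    [DecidableRel T.Adj] (v : V) : ℕ :=
  ((T.neighborFinset v).filter fun u => T.degree u = 1).card

private theorem gi_step {V : Type*} [Fintype V] {A X Y : Matrix V V ℝ}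
    (h1 : A * X * A = A) (h2 : X * A * X = X) (h3 : A * X = X * A)
    (k1 : A * Y * A = A) (k2 : Y * A * Y = Y) (k3 : A * Y = Y * A) :
    A * X = Y * A := by
  have a1 : A * (Y * Y) = Y := by
    rw [← Matrix.mul_assoc, k3, k2]
  have b : A * (X * Y) = Y := by
    calc A * (X * Y) = A * (X * (A * (Y * Y))) := by rw [a1]
    _ = (A * X * A) * (Y * Y) := by simp only [Matrix.mul_assoc]
    _ = A * (Y * Y) := by rw [h1]
    _ = Y := a1
  have c0 : Y * A * A = A := by rw [← k3, k1]
  have cA : A * A * X = A := by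
    calc A * A * X = A * (A * X) := by rw [Matrix.mul_assoc]
    _ = A * (X * A) := by rw [h3]
    _ = A * X * A := by rw [← Matrix.mul_assoc]
    _ = A := h1
  have c : X = X * Y * A := by
    calc X = X * A * X := h2.symm
    _ = X * (Y * A * A) * X := by rw [c0]
    _ = X * Y * (A * A * X) := by simp only [Matrix.mul_assoc]
    _ = X * Y * A := by rw [cA]
  calc A * X = A * (X * Y * A) := by rw [← c]
  _ = A * (X * Y) * A := by simp only [Matrix.mul_assoc]
  _ = Y * A := by rw [b]

private theorem gi_unique {V : Type*} [Fintype V] {A X Y : Matrix V V ℝ}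
    (hX : IsGroupInverse A X) (hY : IsGroupInverse A Y) : X = Y := by
  obtain ⟨h1, h2, h3⟩ := hX
  obtain ⟨k1, k2, k3⟩ := hY
  have d : A * X = Y * A := gi_step h1 h2 h3 k1 k2 k3
  have d' : A * Y = X * A := gi_step k1 k2 k3 h1 h2 h3
  have a1 : A * (Y * Y) = Y := by rw [← Matrix.mul_assoc, k3, k2]
  calc X = X * A * X := h2.symm
  _ = X * (A * X) := by rw [Matrix.mul_assoc]
  _ = X * (Y * A) := by rw [d]
  _ = X * (A * Y) := by rw [k3]
  _ = X * A * Y := by rw [Matrix.mul_assoc]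
  _ = A * Y * Y := by rw [← d']
  _ = Y := by rw [Matrix.mul_assoc, a1]

private theorem tree_path_length {V : Type*} {T : SimpleGraph V} (hT : T.IsTree)
    {x y : V} (p : T.Walk x y) (hp : p.IsPath) : p.length = T.dist x y := by
  obtain ⟨q, hq, hql⟩ := hT.isConnected.exists_path_of_dist x y
  rw [(hT.existsUnique_path x y).unique hp hq, hql]

private theorem tree_adj_dist {V : Type*} {T : SimpleGraph V} (hT : T.IsTree)
    {u v : V} (huv : T.Adj u v) (r : V) :
    T.dist r v = T.dist r u + 1 ∨ T.dist r u = T.dist r v + 1 := by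
  classical
  obtain ⟨p, hp, hpl⟩ := hT.isConnected.exists_path_of_dist r u
  by_cases hv : v ∈ p.support
  · right
    have h1 : (p.takeUntil v hv).length = T.dist r v :=
      tree_path_length hT _ (hp.takeUntil hv)
    have h2 : (p.dropUntil v hv).length = T.dist v u :=
      tree_path_length hT _ (hp.dropUntil hv)
    have h3 : T.dist v u = 1 := dist_eq_one_iff_adj.mpr huv.symm
    have h4 := congr_arg Walk.length (p.take_spec hv)
    rw [Walk.length_append] at h4
    omega
  · left
    have hp' : (p.concat huv).IsPath := by
      rw [Walk.isPath_def, Walk.support_concat]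
      rw [List.nodup_append]
      exact ⟨hp.support_nodup, List.nodup_singleton v, by
        simpa using fun (a : V) (ha : a ∈ p.support) (h : a = v) => hv (h ▸ ha)⟩
    have := tree_path_length hT _ hp'
    rw [Walk.length_concat, hpl] at this
    omega

private theorem tree_adj_parity {V : Type*} {T : SimpleGraph V} (hT : T.IsTree)
    {u v : V} (huv : T.Adj u v) (r : V) :
    ¬ (Even (T.dist r u) ↔ Even (T.dist r v)) := by
  rcases tree_adj_dist hT huv r with h | h <;> rw [h] <;>
    simp [Nat.even_add_one, Nat.not_even_iff_odd, ← Nat.not_odd_iff_even]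

section TreeAux
open Classical Matrix

variable {V : Type*} [Fintype V]

/-- Pendant vertex: degree one. -/
def pend (T : SimpleGraph V) [DecidableRel T.Adj] (v : V) : Prop := T.degree v = 1

/-- A choice of neighbour of each vertex. -/
noncomputable def nbr (T : SimpleGraph V) (v : V) : V :=
  if h : ∃ u, T.Adj v u then h.choose else v

lemma adj_nbr {T : SimpleGraph V} {v : V} (h : ∃ u, T.Adj v u) : T.Adj v (nbr T v) := by
  rw [nbr, dif_pos h]; exact h.choose_spec

/-- Sum of squares of the weights of pendant edges at `q`. -/
noncomputable def sigm (T : SimpleGraph V) [DecidableRel T.Adj] (A : Matrix V V ℝ) (q : V) : ℝ :=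
  ∑ p ∈ (T.neighborFinset q).filter (fun p => pend T p), (A p q) ^ 2

open Classical in
/-- The candidate group inverse. -/
noncomputable def X0 (T : SimpleGraph V) [DecidableRel T.Adj] (A : Matrix V V ℝ) :
    Matrix V V ℝ :=
  Matrix.of fun i j =>
    if pend T i ∧ ¬ pend T j ∧ T.Adj i j then A i j / sigm T A j
    else if ¬ pend T i ∧ pend T j ∧ T.Adj i j then A i j / sigm T A i
    else if pend T i ∧ pend T j ∧ T.Adj (nbr T i) (nbr T j) then
      -(A i (nbr T i) * A (nbr T i) (nbr T j) * A (nbr T j) j) /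
        (sigm T A (nbr T i) * sigm T A (nbr T j))
    else 0

open Classical in
/-- The product `A * X0`. -/
noncomputable def EM (T : SimpleGraph V) [DecidableRel T.Adj] (A : Matrix V V ℝ) :
    Matrix V V ℝ :=
  Matrix.of fun i j =>
    if pend T i ∧ pend T j ∧ nbr T i = nbr T j then
      A i (nbr T i) * A j (nbr T j) / sigm T A (nbr T i)
    else if ¬ pend T i ∧ i = j then 1 else 0

variable {T : SimpleGraph V} [DecidableRel T.Adj] {A : Matrix V V ℝ}

lemma sum_sq (q : V) :
    (∑ k, if pend T k ∧ T.Adj k q then (A k q) ^ 2 else 0) = sigm T A q := by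
  rw [sigm, Finset.sum_filter, neighborFinset_eq_filter, Finset.sum_filter]
  refine Finset.sum_congr rfl fun k _ => ?_
  by_cases h1 : pend T k <;> by_cases h2 : T.Adj k q <;>
    simp [h1, h2, T.adj_comm q k]

variable (hadj : ∀ v, T.Adj v (nbr T v))
  (huniq : ∀ p u, pend T p → T.Adj p u → u = nbr T p)
  (hpnp : ∀ p, pend T p → ¬ pend T (nbr T p))
  (hsig : ∀ q, ¬ pend T q → 0 < sigm T A q)
  (hsymm : ∀ i j, A i j = A j i)
  (hzero : ∀ i j, ¬ T.Adj i j → A i j = 0)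

include hadj huniq hpnp hsig hsymm hzero in
set_option maxHeartbeats 1000000 in
theorem mul_X0 : A * X0 T A = EM T A := by
  ext i j
  rw [Matrix.mul_apply]
  by_cases hi : pend T i
  · rw [Finset.sum_eq_single (nbr T i)]
    rotate_left
    · intro b _ hb
      have hnadj : ¬ T.Adj i b := fun h => hb (huniq i b hi h)
      rw [hzero _ _ hnadj, zero_mul]
    · exact fun h => absurd (Finset.mem_univ _) h
    · have hni : ¬ pend T (nbr T i) := hpnp i hi
      by_cases hj : pend T j ∧ T.Adj (nbr T i) j
      · have hji : nbr T i = nbr T j := huniq j (nbr T i) hj.1 hj.2.symm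
        have c1 : ¬ (pend T (nbr T i) ∧ ¬ pend T j ∧ T.Adj (nbr T i) j) := by tauto
        simp only [X0, EM, Matrix.of_apply]
        rw [if_neg c1, if_pos ⟨hni, hj.1, hj.2⟩, if_pos ⟨hi, hj.1, hji⟩]
        rw [← hji, hsymm j (nbr T i)]
        ring
      · have c1 : ¬ (pend T (nbr T i) ∧ ¬ pend T j ∧ T.Adj (nbr T i) j) := by tauto
        have c2 : ¬ (¬ pend T (nbr T i) ∧ pend T j ∧ T.Adj (nbr T i) j) := by tauto
        have c3 : ¬ (pend T (nbr T i) ∧ pend T j ∧ T.Adj (nbr T (nbr T i)) (nbr T j)) := by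
          tauto
        have c4 : ¬ (pend T i ∧ pend T j ∧ nbr T i = nbr T j) := by
          rintro ⟨-, hpj, he⟩
          have : T.Adj j (nbr T i) := by rw [he]; exact hadj j
          exact hj ⟨hpj, this.symm⟩
        have c5 : ¬ (¬ pend T i ∧ i = j) := by tauto
        simp only [X0, EM, Matrix.of_apply]
        rw [if_neg c1, if_neg c2, if_neg c3, if_neg c4, if_neg c5, mul_zero]
  · by_cases hj : pend T j
    · have hq'np : ¬ pend T (nbr T j) := hpnp j hj
      have hEM : EM T A i j = 0 := by
        have c4 : ¬ (pend T i ∧ pend T j ∧ nbr T i = nbr T j) := by tauto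
        have c5 : ¬ (¬ pend T i ∧ i = j) := by
          rintro ⟨-, rfl⟩; exact hi hj
        simp only [EM, Matrix.of_apply]
        rw [if_neg c4, if_neg c5]
      rw [hEM]
      by_cases hiq : T.Adj i (nbr T j)
      · rw [← Finset.sum_erase_add _ _ (Finset.mem_univ (nbr T j))]
        have h1 : A i (nbr T j) * X0 T A (nbr T j) j
            = A i (nbr T j) * A (nbr T j) j / sigm T A (nbr T j) := by
          have c1 : ¬ (pend T (nbr T j) ∧ ¬ pend T j ∧ T.Adj (nbr T j) j) := by tauto
          simp only [X0, Matrix.of_apply]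
          rw [if_neg c1, if_pos ⟨hq'np, hj, (hadj j).symm⟩]
          ring
        have h2 : ∀ k ∈ Finset.univ.erase (nbr T j),
            A i k * X0 T A k j =
            (if pend T k ∧ T.Adj k i then (A k i) ^ 2 else 0) *
              (-(A i (nbr T j) * A (nbr T j) j) / (sigm T A i * sigm T A (nbr T j))) := by
          intro k hk
          have hkq : k ≠ nbr T j := Finset.ne_of_mem_erase hk
          by_cases hpk : pend T k
          · by_cases hki : T.Adj k i
            · have hnk : nbr T k = i := (huniq k i hpk hki).symm
              have c1 : ¬ (pend T k ∧ ¬ pend T j ∧ T.Adj k j) := by tauto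
              have c2 : ¬ (¬ pend T k ∧ pend T j ∧ T.Adj k j) := by tauto
              simp only [X0, Matrix.of_apply]
              rw [if_neg c1, if_neg c2, if_pos ⟨hpk, hj, by rwa [hnk]⟩, hnk,
                if_pos ⟨hpk, hki⟩, hsymm i k]
              ring
            · rw [hzero i k (fun h => hki h.symm), if_neg (fun h => hki h.2)]
              ring
          · have hX : X0 T A k j = 0 := by
              have c1 : ¬ (pend T k ∧ ¬ pend T j ∧ T.Adj k j) := by tauto
              have c2 : ¬ (¬ pend T k ∧ pend T j ∧ T.Adj k j) := by
                rintro ⟨-, -, hkj⟩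
                exact hkq (huniq j k hj hkj.symm)
              have c3 : ¬ (pend T k ∧ pend T j ∧ T.Adj (nbr T k) (nbr T j)) := by tauto
              simp only [X0, Matrix.of_apply]
              rw [if_neg c1, if_neg c2, if_neg c3]
            rw [hX, if_neg (fun h => hpk h.1)]
            ring
        rw [Finset.sum_congr rfl h2]
        rw [← Finset.sum_mul]
        rw [h1]
        rw [Finset.sum_erase _ (by rw [if_neg (fun h => hq'np h.1)])]
        rw [sum_sq]
        have hsi : sigm T A i ≠ 0 := (hsig i hi).ne'
        have hsq : sigm T A (nbr T j) ≠ 0 := (hsig _ hq'np).ne'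
        field_simp
        ring
      · refine Finset.sum_eq_zero fun k _ => ?_
        by_cases hik : T.Adj i k
        · have hX : X0 T A k j = 0 := by
            have c1 : ¬ (pend T k ∧ ¬ pend T j ∧ T.Adj k j) := by tauto
            have c2 : ¬ (¬ pend T k ∧ pend T j ∧ T.Adj k j) := by
              rintro ⟨-, -, hkj⟩
              rw [← huniq j k hj hkj.symm] at hiq
              exact hiq hik
            have c3 : ¬ (pend T k ∧ pend T j ∧ T.Adj (nbr T k) (nbr T j)) := by
              rintro ⟨hpk, -, hadj'⟩
              rw [(huniq k i hpk hik.symm).symm] at hadj'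
              exact hiq hadj'
            simp only [X0, Matrix.of_apply]
            rw [if_neg c1, if_neg c2, if_neg c3]
          rw [hX, mul_zero]
        · rw [hzero i k hik, zero_mul]
    · by_cases hij : i = j
      · subst hij
        have h2 : ∀ k ∈ (Finset.univ : Finset V),
            A i k * X0 T A k i =
              (if pend T k ∧ T.Adj k i then (A k i) ^ 2 else 0) / sigm T A i := by
          intro k _
          by_cases hpk : pend T k
          · by_cases hki : T.Adj k i
            · simp only [X0, Matrix.of_apply]
              rw [if_pos ⟨hpk, hi, hki⟩, if_pos ⟨hpk, hki⟩, hsymm i k]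
              ring
            · rw [hzero i k (fun h => hki h.symm), if_neg (fun h => hki h.2)]
              ring
          · have hX : X0 T A k i = 0 := by
              have c1 : ¬ (pend T k ∧ ¬ pend T i ∧ T.Adj k i) := by tauto
              have c2 : ¬ (¬ pend T k ∧ pend T i ∧ T.Adj k i) := by tauto
              have c3 : ¬ (pend T k ∧ pend T i ∧ T.Adj (nbr T k) (nbr T i)) := by tauto
              simp only [X0, Matrix.of_apply]
              rw [if_neg c1, if_neg c2, if_neg c3]
            rw [hX, if_neg (fun h => hpk h.1)]
            ring
        rw [Finset.sum_congr rfl h2, ← Finset.sum_div, sum_sq, div_self (hsig i hi).ne']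
        simp [EM, hi]
      · have hEM : EM T A i j = 0 := by
          have c4 : ¬ (pend T i ∧ pend T j ∧ nbr T i = nbr T j) := by tauto
          have c5 : ¬ (¬ pend T i ∧ i = j) := by tauto
          simp only [EM, Matrix.of_apply]
          rw [if_neg c4, if_neg c5]
        rw [hEM]
        refine Finset.sum_eq_zero fun k _ => ?_
        by_cases hik : T.Adj i k
        · have hX : X0 T A k j = 0 := by
            have c1 : ¬ (pend T k ∧ ¬ pend T j ∧ T.Adj k j) := by
              rintro ⟨hpk, -, hkj⟩
              exact hij ((huniq k i hpk hik.symm).trans (huniq k j hpk hkj).symm)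
            have c2 : ¬ (¬ pend T k ∧ pend T j ∧ T.Adj k j) := by tauto
            have c3 : ¬ (pend T k ∧ pend T j ∧ T.Adj (nbr T k) (nbr T j)) := by tauto
            simp only [X0, Matrix.of_apply]
            rw [if_neg c1, if_neg c2, if_neg c3]
          rw [hX, mul_zero]
        · rw [hzero i k hik, zero_mul]

include huniq hsymm in
theorem X0_symm : (X0 T A)ᵀ = X0 T A := by
  ext i j
  rw [Matrix.transpose_apply]
  simp only [X0, Matrix.of_apply]
  by_cases hpi : pend T i <;> by_cases hpj : pend T j
  · have c1 : ¬ (pend T j ∧ ¬ pend T i ∧ T.Adj j i) := by tauto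
    have c2 : ¬ (¬ pend T j ∧ pend T i ∧ T.Adj j i) := by tauto
    have c1' : ¬ (pend T i ∧ ¬ pend T j ∧ T.Adj i j) := by tauto
    have c2' : ¬ (¬ pend T i ∧ pend T j ∧ T.Adj i j) := by tauto
    rw [if_neg c1, if_neg c2, if_neg c1', if_neg c2']
    by_cases hq : T.Adj (nbr T i) (nbr T j)
    · rw [if_pos ⟨hpj, hpi, hq.symm⟩, if_pos ⟨hpi, hpj, hq⟩]
      rw [hsymm (nbr T j) (nbr T i), hsymm j (nbr T j), hsymm (nbr T i) i]
      ring
    · rw [if_neg (fun h => hq h.2.2.symm), if_neg (fun h => hq h.2.2)]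
  · by_cases hij : T.Adj i j
    · have c1 : ¬ (pend T j ∧ ¬ pend T i ∧ T.Adj j i) := by tauto
      rw [if_neg c1, if_pos ⟨hpj, hpi, hij.symm⟩, if_pos ⟨hpi, hpj, hij⟩, hsymm j i]
    · have c1 : ¬ (pend T j ∧ ¬ pend T i ∧ T.Adj j i) := by tauto
      have c2 : ¬ (¬ pend T j ∧ pend T i ∧ T.Adj j i) := fun h => hij h.2.2.symm
      have c3 : ¬ (pend T j ∧ pend T i ∧ T.Adj (nbr T j) (nbr T i)) := by tauto
      have c1' : ¬ (pend T i ∧ ¬ pend T j ∧ T.Adj i j) := fun h => hij h.2.2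
      have c2' : ¬ (¬ pend T i ∧ pend T j ∧ T.Adj i j) := by tauto
      have c3' : ¬ (pend T i ∧ pend T j ∧ T.Adj (nbr T i) (nbr T j)) := by tauto
      rw [if_neg c1, if_neg c2, if_neg c3, if_neg c1', if_neg c2', if_neg c3']
  · by_cases hij : T.Adj i j
    · have c1' : ¬ (pend T i ∧ ¬ pend T j ∧ T.Adj i j) := by tauto
      rw [if_pos ⟨hpj, hpi, hij.symm⟩, if_neg c1', if_pos ⟨hpi, hpj, hij⟩, hsymm j i]
    · have c1 : ¬ (pend T j ∧ ¬ pend T i ∧ T.Adj j i) := fun h => hij h.2.2.symm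
      have c2 : ¬ (¬ pend T j ∧ pend T i ∧ T.Adj j i) := by tauto
      have c3 : ¬ (pend T j ∧ pend T i ∧ T.Adj (nbr T j) (nbr T i)) := by tauto
      have c1' : ¬ (pend T i ∧ ¬ pend T j ∧ T.Adj i j) := by tauto
      have c2' : ¬ (¬ pend T i ∧ pend T j ∧ T.Adj i j) := fun h => hij h.2.2
      have c3' : ¬ (pend T i ∧ pend T j ∧ T.Adj (nbr T i) (nbr T j)) := by tauto
      rw [if_neg c1, if_neg c2, if_neg c3, if_neg c1', if_neg c2', if_neg c3']
  · have c1 : ¬ (pend T j ∧ ¬ pend T i ∧ T.Adj j i) := by tauto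
    have c2 : ¬ (¬ pend T j ∧ pend T i ∧ T.Adj j i) := by tauto
    have c3 : ¬ (pend T j ∧ pend T i ∧ T.Adj (nbr T j) (nbr T i)) := by tauto
    have c1' : ¬ (pend T i ∧ ¬ pend T j ∧ T.Adj i j) := by tauto
    have c2' : ¬ (¬ pend T i ∧ pend T j ∧ T.Adj i j) := by tauto
    have c3' : ¬ (pend T i ∧ pend T j ∧ T.Adj (nbr T i) (nbr T j)) := by tauto
    rw [if_neg c1, if_neg c2, if_neg c3, if_neg c1', if_neg c2', if_neg c3']

omit hadj huniq hpnp hsig hzero in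
include hsymm in
theorem EM_symm : (EM T A)ᵀ = EM T A := by
  ext i j
  rw [Matrix.transpose_apply]
  simp only [EM, Matrix.of_apply]
  by_cases h : pend T i ∧ pend T j ∧ nbr T i = nbr T j
  · rw [if_pos ⟨h.2.1, h.1, h.2.2.symm⟩, if_pos h, h.2.2]
    ring
  · have c1 : ¬ (pend T j ∧ pend T i ∧ nbr T j = nbr T i) := by
      rintro ⟨a, b, c⟩; exact h ⟨b, a, c.symm⟩
    rw [if_neg c1, if_neg h]
    by_cases hij : i = j
    · subst hij; rfl
    · rw [if_neg (fun hh => hij hh.2.symm), if_neg (fun hh => hij hh.2)]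

set_option linter.unusedSectionVars false

include hadj huniq hpnp hsig hsymm hzero in
set_option maxHeartbeats 1000000 in
theorem EM_mul_A : EM T A * A = A := by
  ext i j
  rw [Matrix.mul_apply]
  by_cases hi : pend T i
  · by_cases hji : j = nbr T i
    · subst hji
      have h2 : ∀ k ∈ (Finset.univ : Finset V),
          EM T A i k * A k (nbr T i) =
            (if pend T k ∧ T.Adj k (nbr T i) then (A k (nbr T i)) ^ 2 else 0) *
              (A i (nbr T i) / sigm T A (nbr T i)) := by
        intro k _
        by_cases hpk : pend T k
        · by_cases hnk : nbr T k = nbr T i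
          · have hkadj : T.Adj k (nbr T i) := by rw [← hnk]; exact hadj k
            simp only [EM, Matrix.of_apply]
            rw [if_pos ⟨hi, hpk, hnk.symm⟩, if_pos ⟨hpk, hkadj⟩, ← hnk]
            ring
          · have c4 : ¬ (pend T i ∧ pend T k ∧ nbr T i = nbr T k) := by
              rintro ⟨-, -, h⟩; exact hnk h.symm
            have c5 : ¬ (¬ pend T i ∧ i = k) := by tauto
            have c6 : ¬ (pend T k ∧ T.Adj k (nbr T i)) := by
              rintro ⟨-, h⟩; exact hnk (huniq k (nbr T i) hpk h).symm
            simp only [EM, Matrix.of_apply]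
            rw [if_neg c4, if_neg c5, if_neg c6]
            ring
        · have c4 : ¬ (pend T i ∧ pend T k ∧ nbr T i = nbr T k) := by tauto
          have c5 : ¬ (¬ pend T i ∧ i = k) := by tauto
          have c6 : ¬ (pend T k ∧ T.Adj k (nbr T i)) := by tauto
          simp only [EM, Matrix.of_apply]
          rw [if_neg c4, if_neg c5, if_neg c6]
          ring
      rw [Finset.sum_congr rfl h2]
      rw [← Finset.sum_mul]
      rw [sum_sq]
      have hs : sigm T A (nbr T i) ≠ 0 := (hsig _ (hpnp i hi)).ne'
      field_simp
    · have hAij : A i j = 0 := by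
        refine hzero i j fun h => hji (huniq i j hi h)
      rw [hAij]
      refine Finset.sum_eq_zero fun k _ => ?_
      by_cases hk : pend T k ∧ nbr T i = nbr T k
      · have hAkj : A k j = 0 := by
          refine hzero k j fun h => hji ?_
          rw [huniq k j hk.1 h, ← hk.2]
        rw [hAkj, mul_zero]
      · have c4 : ¬ (pend T i ∧ pend T k ∧ nbr T i = nbr T k) := by tauto
        have c5 : ¬ (¬ pend T i ∧ i = k) := by tauto
        simp only [EM, Matrix.of_apply]
        rw [if_neg c4, if_neg c5, zero_mul]
  · rw [Finset.sum_eq_single i]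
    rotate_left
    · intro k _ hk
      have c4 : ¬ (pend T i ∧ pend T k ∧ nbr T i = nbr T k) := by tauto
      have c5 : ¬ (¬ pend T i ∧ i = k) := fun h => hk h.2.symm
      simp only [EM, Matrix.of_apply]
      rw [if_neg c4, if_neg c5, zero_mul]
    · exact fun h => absurd (Finset.mem_univ _) h
    · simp [EM, hi]

include hadj huniq hpnp hsig hsymm hzero in
set_option maxHeartbeats 1600000 in
theorem X0_mul_EM : X0 T A * EM T A = X0 T A := by
  ext i j
  rw [Matrix.mul_apply]
  by_cases hj : pend T j
  · have hnj : ¬ pend T (nbr T j) := hpnp j hj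
    have key : ∀ k, EM T A k j =
        if pend T k ∧ nbr T k = nbr T j then A k (nbr T j) * A j (nbr T j) / sigm T A (nbr T j)
        else 0 := by
      intro k
      by_cases hk : pend T k ∧ nbr T k = nbr T j
      · simp only [EM, Matrix.of_apply]
        rw [if_pos ⟨hk.1, hj, hk.2⟩, if_pos hk, hk.2]
      · have c4 : ¬ (pend T k ∧ pend T j ∧ nbr T k = nbr T j) := by tauto
        have c5 : ¬ (¬ pend T k ∧ k = j) := by
          rintro ⟨h, rfl⟩; exact h hj
        simp only [EM, Matrix.of_apply]
        rw [if_neg c4, if_neg c5, if_neg hk]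
    by_cases hi : pend T i
    · by_cases hqq : T.Adj (nbr T i) (nbr T j)
      · have h2 : ∀ k ∈ (Finset.univ : Finset V),
            X0 T A i k * EM T A k j =
              (if pend T k ∧ T.Adj k (nbr T j) then (A k (nbr T j)) ^ 2 else 0) *
                (-(A i (nbr T i) * A (nbr T i) (nbr T j) * A j (nbr T j)) /
                  (sigm T A (nbr T i) * sigm T A (nbr T j) * sigm T A (nbr T j))) := by
          intro k _
          rw [key k]
          by_cases hk : pend T k ∧ nbr T k = nbr T j
          · have hkadj : T.Adj k (nbr T j) := by rw [← hk.2]; exact hadj k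
            have c1 : ¬ (pend T i ∧ ¬ pend T k ∧ T.Adj i k) := by tauto
            have c2 : ¬ (¬ pend T i ∧ pend T k ∧ T.Adj i k) := by tauto
            simp only [X0, Matrix.of_apply]
            rw [if_neg c1, if_neg c2, if_pos ⟨hi, hk.1, by rw [hk.2]; exact hqq⟩,
              if_pos hk, if_pos ⟨hk.1, hkadj⟩, hk.2, hsymm (nbr T j) k]
            ring
          · rw [if_neg hk, mul_zero, if_neg ?_, zero_mul]
            rintro ⟨hpk, hadk⟩
            exact hk ⟨hpk, (huniq k (nbr T j) hpk hadk).symm⟩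
        rw [Finset.sum_congr rfl h2]
        rw [← Finset.sum_mul]
        rw [sum_sq]
        have c1 : ¬ (pend T i ∧ ¬ pend T j ∧ T.Adj i j) := by tauto
        have c2 : ¬ (¬ pend T i ∧ pend T j ∧ T.Adj i j) := by tauto
        simp only [X0, Matrix.of_apply]
        rw [if_neg c1, if_neg c2, if_pos ⟨hi, hj, hqq⟩]
        have hs1 : sigm T A (nbr T j) ≠ 0 := (hsig _ hnj).ne'
        have hs2 : sigm T A (nbr T i) ≠ 0 := (hsig _ (hpnp i hi)).ne'
        rw [hsymm (nbr T j) j]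
        field_simp
      · have hX : X0 T A i j = 0 := by
          have c1 : ¬ (pend T i ∧ ¬ pend T j ∧ T.Adj i j) := by tauto
          have c2 : ¬ (¬ pend T i ∧ pend T j ∧ T.Adj i j) := by tauto
          have c3 : ¬ (pend T i ∧ pend T j ∧ T.Adj (nbr T i) (nbr T j)) := by tauto
          simp only [X0, Matrix.of_apply]
          rw [if_neg c1, if_neg c2, if_neg c3]
        rw [hX]
        refine Finset.sum_eq_zero fun k _ => ?_
        rw [key k]
        by_cases hk : pend T k ∧ nbr T k = nbr T j
        · have hX2 : X0 T A i k = 0 := by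
            have c1 : ¬ (pend T i ∧ ¬ pend T k ∧ T.Adj i k) := by tauto
            have c2 : ¬ (¬ pend T i ∧ pend T k ∧ T.Adj i k) := by tauto
            have c3 : ¬ (pend T i ∧ pend T k ∧ T.Adj (nbr T i) (nbr T k)) := by
              rintro ⟨-, -, h⟩; rw [hk.2] at h; exact hqq h
            simp only [X0, Matrix.of_apply]
            rw [if_neg c1, if_neg c2, if_neg c3]
          rw [hX2, zero_mul]
        · rw [if_neg hk, mul_zero]
    · by_cases hiq : i = nbr T j
      · subst hiq
        have h2 : ∀ k ∈ (Finset.univ : Finset V),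
            X0 T A (nbr T j) k * EM T A k j =
              (if pend T k ∧ T.Adj k (nbr T j) then (A k (nbr T j)) ^ 2 else 0) *
                (A j (nbr T j) / (sigm T A (nbr T j) * sigm T A (nbr T j))) := by
          intro k _
          rw [key k]
          by_cases hk : pend T k ∧ nbr T k = nbr T j
          · have hkadj : T.Adj k (nbr T j) := by rw [← hk.2]; exact hadj k
            have c1 : ¬ (pend T (nbr T j) ∧ ¬ pend T k ∧ T.Adj (nbr T j) k) := by tauto
            simp only [X0, Matrix.of_apply]
            rw [if_neg c1, if_pos ⟨hi, hk.1, hkadj.symm⟩, if_pos hk, if_pos ⟨hk.1, hkadj⟩,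
              hsymm (nbr T j) k]
            ring
          · rw [if_neg hk, mul_zero, if_neg ?_, zero_mul]
            rintro ⟨hpk, hadk⟩
            exact hk ⟨hpk, (huniq k (nbr T j) hpk hadk).symm⟩
        rw [Finset.sum_congr rfl h2]
        rw [← Finset.sum_mul]
        rw [sum_sq]
        have c1 : ¬ (pend T (nbr T j) ∧ ¬ pend T j ∧ T.Adj (nbr T j) j) := by tauto
        simp only [X0, Matrix.of_apply]
        rw [if_neg c1, if_pos ⟨hi, hj, (hadj j).symm⟩]
        have hs1 : sigm T A (nbr T j) ≠ 0 := (hsig _ hnj).ne'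
        field_simp
        rw [hsymm j (nbr T j)]
      · have hX : X0 T A i j = 0 := by
          have c1 : ¬ (pend T i ∧ ¬ pend T j ∧ T.Adj i j) := by tauto
          have c2 : ¬ (¬ pend T i ∧ pend T j ∧ T.Adj i j) := by
            rintro ⟨-, -, h⟩; exact hiq (huniq j i hj h.symm)
          have c3 : ¬ (pend T i ∧ pend T j ∧ T.Adj (nbr T i) (nbr T j)) := by tauto
          simp only [X0, Matrix.of_apply]
          rw [if_neg c1, if_neg c2, if_neg c3]
        rw [hX]
        refine Finset.sum_eq_zero fun k _ => ?_
        rw [key k]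
        by_cases hk : pend T k ∧ nbr T k = nbr T j
        · have hX2 : X0 T A i k = 0 := by
            have c1 : ¬ (pend T i ∧ ¬ pend T k ∧ T.Adj i k) := by tauto
            have c2 : ¬ (¬ pend T i ∧ pend T k ∧ T.Adj i k) := by
              rintro ⟨-, -, h⟩
              exact hiq ((huniq k i hk.1 h.symm).trans hk.2)

            have c3 : ¬ (pend T i ∧ pend T k ∧ T.Adj (nbr T i) (nbr T k)) := by tauto
            simp only [X0, Matrix.of_apply]
            rw [if_neg c1, if_neg c2, if_neg c3]
          rw [hX2, zero_mul]
        · rw [if_neg hk, mul_zero]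
  · rw [Finset.sum_eq_single j]
    rotate_left
    · intro k _ hk
      have c4 : ¬ (pend T k ∧ pend T j ∧ nbr T k = nbr T j) := by tauto
      have c5 : ¬ (¬ pend T k ∧ k = j) := fun h => hk h.2
      simp only [EM, Matrix.of_apply]
      rw [if_neg c4, if_neg c5, mul_zero]
    · exact fun h => absurd (Finset.mem_univ _) h
    · simp [EM, hj]

include hadj huniq hpnp hsig hsymm hzero in
theorem X0_groupInverse (hAs : Aᵀ = A) : IsGroupInverse A (X0 T A) := by
  have hAX : A * X0 T A = EM T A := mul_X0 hadj huniq hpnp hsig hsymm hzero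
  have hXs : (X0 T A)ᵀ = X0 T A := X0_symm huniq hsymm
  have hEs : (EM T A)ᵀ = EM T A := EM_symm hsymm
  have hXA : X0 T A * A = EM T A := by
    have h := congrArg Matrix.transpose hAX
    rw [Matrix.transpose_mul, hXs, hAs, hEs] at h
    exact h
  have hXE : X0 T A * EM T A = X0 T A := X0_mul_EM hadj huniq hpnp hsig hsymm hzero
  have hEX : EM T A * X0 T A = X0 T A := by
    have h := congrArg Matrix.transpose hXE
    rw [Matrix.transpose_mul, hXs, hEs] at h
    exact h
  refine ⟨?_, ?_, ?_⟩
  · rw [hAX]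
    exact EM_mul_A hadj huniq hpnp hsig hsymm hzero
  · rw [hXA]
    exact hEX
  · rw [hAX, hXA]

end TreeAux

/-- For a positively weighted tree of class 𝕋 with adjacency matrix A,
there is a signature matrix S = diag(±1) such that S A# S is entrywise nonnegative. -/
theorem classT_signature_similar_nonneg {V : Type*} [Fintype V]
    (T : SimpleGraph V) [DecidableRel T.Adj] (hT : InClassT T)
    (A X : Matrix V V ℝ) (hsym : A.IsSymm)
    (hpos : ∀ i j, T.Adj i j → 0 < A i j)
    (hzero : ∀ i j, ¬ T.Adj i j → A i j = 0)
    (hX : IsGroupInverse A X) :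
    ∃ s : V → ℝ, (∀ i, s i = 1 ∨ s i = -1) ∧
      ∀ i j, 0 ≤ s i * X i j * s j := by
  classical
  obtain ⟨hTree, hex1, hPend⟩ := hT
  obtain ⟨v₀, hv₀⟩ := hex1
  obtain ⟨u₀, hu₀adj, hu₀⟩ := hPend v₀ hv₀
  have hconn := hTree.isConnected
  have hex : ∀ v, ∃ u, T.Adj v u := by
    intro v
    by_cases h : v = v₀
    · exact h ▸ ⟨u₀, hu₀adj⟩
    · obtain ⟨w⟩ := hconn.preconnected v v₀
      cases w with
      | nil => exact absurd rfl h
      | cons h' _ => exact ⟨_, h'⟩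
  have hadj : ∀ v, T.Adj v (nbr T v) := fun v => adj_nbr (hex v)
  have huniq : ∀ p u, pend T p → T.Adj p u → u = nbr T p := by
    intro p u hp h
    obtain ⟨a, ha⟩ := Finset.card_eq_one.mp hp
    have h1 : u ∈ T.neighborFinset p := (T.mem_neighborFinset p u).mpr h
    have h2 : nbr T p ∈ T.neighborFinset p := (T.mem_neighborFinset _ _).mpr (hadj p)
    rw [ha, Finset.mem_singleton] at h1 h2
    rw [h1, h2]
  have hpnp : ∀ p, pend T p → ¬ pend T (nbr T p) := by
    intro p hp hn
    have hclo : ∀ {x y : V} (w : T.Walk x y),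
        (x = p ∨ x = nbr T p) → (y = p ∨ y = nbr T p) := by
      intro x y w
      induction w with
      | nil => exact id
      | cons hab _ ih =>
          rintro (rfl | rfl)
          · exact ih (Or.inr (huniq _ _ hp hab))
          · exact ih (Or.inl ((huniq _ _ hn hab).trans
              (huniq _ _ hn (hadj p).symm).symm))
    obtain ⟨w⟩ := hconn.preconnected p v₀
    rcases hclo w (Or.inl rfl) with h | h
    · rw [h] at hv₀; exact hv₀ hp
    · rw [h] at hv₀; exact hv₀ hn
  have hsymm' : ∀ i j, A i j = A j i := fun i j => congrFun (congrFun hsym j) i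
  have hsig : ∀ q, ¬ pend T q → 0 < sigm T A q := by
    intro q hq
    obtain ⟨u, hqu, hud⟩ := hPend q hq
    have hmem : u ∈ (T.neighborFinset q).filter (fun p => pend T p) := by
      rw [Finset.mem_filter, T.mem_neighborFinset]
      exact ⟨hqu, hud⟩
    refine Finset.sum_pos' (fun x _ => sq_nonneg _) ⟨u, hmem, ?_⟩
    have h0 : 0 < A u q := by rw [hsymm' u q]; exact hpos q u hqu
    positivity
  have hAs : A.transpose = A := hsym
  have hGI : IsGroupInverse A (X0 T A) :=
    X0_groupInverse hadj huniq hpnp hsig hsymm' hzero hAs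
  have hXX : X = X0 T A := gi_unique hX hGI
  set t : V → ℝ := fun v => if Even (T.dist v₀ v) then (1:ℝ) else -1 with ht
  set s : V → ℝ := fun v => if pend T v then t (nbr T v) else t v with hs
  have htpm : ∀ v, t v = 1 ∨ t v = -1 := by
    intro v
    by_cases h : Even (T.dist v₀ v) <;> simp [ht, h]
  have hspm : ∀ v, s v = 1 ∨ s v = -1 := by
    intro v
    by_cases h : pend T v <;> simp only [hs, if_pos, if_neg, h, ite_true, ite_false] <;>
      apply htpm
  refine ⟨s, hspm, ?_⟩
  have hmul : ∀ u v, T.Adj u v → t u * t v = -1 := by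
    intro u v huv
    have hpar := tree_adj_parity hTree huv v₀
    by_cases hu1 : Even (T.dist v₀ u) <;> by_cases hu2 : Even (T.dist v₀ v) <;>
      simp [ht, hu1, hu2] at hpar ⊢ <;> tauto
  intro i j
  rw [hXX]
  simp only [X0, Matrix.of_apply]
  split_ifs with h1 h2 h3
  · obtain ⟨hi, hj, hij⟩ := h1
    have hji : j = nbr T i := huniq i j hi hij
    have hsi : s i = t j := by simp only [hs]; rw [if_pos hi, ← hji]
    have hsj : s j = t j := by simp only [hs]; rw [if_neg hj]
    have hv : 0 ≤ A i j / sigm T A j := div_nonneg (hpos i j hij).le (hsig j hj).le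
    rw [hsi, hsj]
    rcases htpm j with h | h <;> rw [h] <;> linarith
  · obtain ⟨hi, hj, hij⟩ := h2
    have hji : i = nbr T j := huniq j i hj hij.symm
    have hsi : s i = t i := by simp only [hs]; rw [if_neg hi]
    have hsj : s j = t i := by simp only [hs]; rw [if_pos hj, ← hji]
    have hv : 0 ≤ A i j / sigm T A i := div_nonneg (hpos i j hij).le (hsig i hi).le
    rw [hsi, hsj]
    rcases htpm i with h | h <;> rw [h] <;> linarith
  · obtain ⟨hi, hj, hq⟩ := h3
    have hsi : s i = t (nbr T i) := by simp only [hs]; rw [if_pos hi]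
    have hsj : s j = t (nbr T j) := by simp only [hs]; rw [if_pos hj]
    have w1 : 0 < A i (nbr T i) := hpos _ _ (hadj i)
    have w2 : 0 < A (nbr T i) (nbr T j) := hpos _ _ hq
    have w3 : 0 < A (nbr T j) j := by rw [hsymm']; exact hpos _ _ (hadj j)
    have s1 : 0 < sigm T A (nbr T i) := hsig _ (hpnp i hi)
    have s2 : 0 < sigm T A (nbr T j) := hsig _ (hpnp j hj)
    have hval : -(A i (nbr T i) * A (nbr T i) (nbr T j) * A (nbr T j) j) /
        (sigm T A (nbr T i) * sigm T A (nbr T j)) ≤ 0 := by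
      apply div_nonpos_of_nonpos_of_nonneg
      · nlinarith [mul_pos (mul_pos w1 w2) w3]
      · positivity
    have hm := hmul _ _ hq
    rw [hsi, hsj]
    rcases htpm (nbr T i) with ha | ha <;> rcases htpm (nbr T j) with hb | hb <;>
      rw [ha, hb] at hm ⊢ <;> nlinarith
  · simp
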